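/- arXiv:1909.01030 — 2 statements merged into one kernel-verified Lean document; each statement's English description precedes it below -/
import Mathlib

section
/- Let F_q be a finite field with q elements, let m ≥ 2, and let d1, …, dm, k be natural numbers with k < di for all i. The number of m-tuples (h1, …, hm) of monic polynomials over F_q with deg hi = di for all i and whose (monic) greatest common divisor has degree exactly k equals q^k · (q^{Σ(di−k)} − q^{Σ(di−k)−(m−1)}), where Σ(di−k) = (d1−k) + ⋯ + (dm−k). -/
/-!
Factoring out the monic gcd `g` writes a tuple with gcd of degree `j` uniquely as `g * t` with
`t` coprime, so `#{gcd of degree j in degrees e} = q ^ j * C(e - j)`, where `C` counts coprime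
tuples. Sorting all `q ^ Σ e` monic tuples by gcd degree gives `q ^ Σ e = Σ_j q ^ j * C(e - j)`.
Comparing this identity for `e` and for `e - 1` (all `e i ≥ 1`), every term with `j ≥ 1` of the
first is `q` times a term of the second, hence `C(e) = q ^ Σ e - q ^ (Σ e - m + 1)`.
-/

open Polynomial Finset

theorem Set.ncard_eq_sum_ncard_fiberwise {α : Type*} {s : Set α} (hs : s.Finite) {f : α → ℕ}
    {N : ℕ} (hf : ∀ x ∈ s, f x < N) :
    s.ncard = ∑ j ∈ Finset.range N, {x ∈ s | f x = j}.ncard := by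
  classical
  rw [Set.ncard_eq_toFinset_card s hs,
    card_eq_sum_card_fiberwise fun x hx => Finset.mem_range.2 (hf x (by simpa using hx))]
  refine sum_congr rfl fun j _ => ?_
  rw [← Set.ncard_coe_finset, coe_filter]
  simp only [Set.Finite.mem_toFinset]

namespace Polynomial

section Field

variable {F : Type*} [Field F]

theorem natCard_monic_natDegree_eq (n : ℕ) :
    Nat.card {p : F[X] // p.Monic ∧ p.natDegree = n} = Nat.card F ^ n := by
  rw [Nat.card_congr ((monicEquivDegreeLT n).trans (degreeLTEquiv F n).toEquiv), Nat.card_fun,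
    Nat.card_fin]

instance [Finite F] (n : ℕ) : Finite {p : F[X] // p.Monic ∧ p.natDegree = n} :=
  .of_equiv _ ((monicEquivDegreeLT n).trans (degreeLTEquiv F n).toEquiv).symm

variable {ι : Type*}

def monicTuples (e : ι → ℕ) : Set (ι → F[X]) :=
  {h | ∀ i, (h i).Monic ∧ (h i).natDegree = e i}

def monicTuplesEquivPi (e : ι → ℕ) :
    monicTuples (F := F) e ≃ ∀ i, {p : F[X] // p.Monic ∧ p.natDegree = e i} :=
  Equiv.subtypePiEquivPi (p := fun i (p : F[X]) => p.Monic ∧ p.natDegree = e i)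

theorem ncard_monicTuples [Fintype ι] (e : ι → ℕ) :
    (monicTuples (F := F) e).ncard = Nat.card F ^ ∑ i, e i := by
  rw [← Nat.card_coe_set_eq, Nat.card_congr (monicTuplesEquivPi e), Nat.card_pi]
  simp only [natCard_monic_natDegree_eq, prod_pow_eq_pow_sum]

theorem finite_monicTuples [Finite F] [Finite ι] (e : ι → ℕ) :
    (monicTuples (F := F) e).Finite :=
  Set.finite_coe_iff.1 (.of_equiv _ (monicTuplesEquivPi e).symm)

end Field

section Gcd

variable {F : Type*} [Field F] [DecidableEq F] {ι : Type*}

theorem monic_gcd_of_mem {s : Finset ι} {f : ι → F[X]} {i : ι} (hi : i ∈ s)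
    (hf : f i ≠ 0) : (s.gcd f).Monic := by
  rw [← Finset.normalize_gcd]
  exact monic_normalize fun h0 => hf (gcd_eq_zero_iff.1 h0 i hi)

theorem Monic.gcd_mul_left {g : F[X]} (hg : g.Monic) (s : Finset ι) (f : ι → F[X]) :
    s.gcd (fun i => g * f i) = g * s.gcd f := by
  rw [Finset.gcd_mul_left, hg.normalize_eq_self]

variable [Fintype ι] {e : ι → ℕ} {h : ι → F[X]}

def monicTuplesGcdDegree (e : ι → ℕ) (j : ℕ) : Set (ι → F[X]) :=
  {h ∈ monicTuples e | (univ.gcd h).natDegree = j}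

theorem natDegree_gcd_le_of_mem_monicTuples (hh : h ∈ monicTuples e) (i : ι) :
    (univ.gcd h).natDegree ≤ e i :=
  (hh i).2 ▸ natDegree_le_of_dvd (gcd_dvd (mem_univ i)) (hh i).1.ne_zero

variable [Nonempty ι]

theorem monic_gcd_of_mem_monicTuples (hh : h ∈ monicTuples e) : (univ.gcd h).Monic :=
  monic_gcd_of_mem (mem_univ (Classical.arbitrary ι)) (hh _).1.ne_zero

theorem gcd_eq_one_of_mem_monicTuplesGcdDegree_zero (hh : h ∈ monicTuplesGcdDegree e 0) :
    univ.gcd h = 1 :=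
  (monic_gcd_of_mem_monicTuples hh.1).natDegree_eq_zero.1 hh.2

theorem Monic.gcd_mul_eq_self {g : F[X]} (hg : g.Monic) (ht : h ∈ monicTuplesGcdDegree e 0) :
    univ.gcd (fun i => g * h i) = g := by
  rw [hg.gcd_mul_left, gcd_eq_one_of_mem_monicTuplesGcdDegree_zero ht, mul_one]

theorem Monic.mul_mem_monicTuplesGcdDegree {g : F[X]} (hg : g.Monic)
    (ht : h ∈ monicTuplesGcdDegree e 0) :
    (fun i => g * h i) ∈ monicTuplesGcdDegree (fun i => g.natDegree + e i) g.natDegree := by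
  refine ⟨fun i => ⟨hg.mul (ht.1 i).1, ?_⟩, by rw [hg.gcd_mul_eq_self ht]⟩
  rw [hg.natDegree_mul (ht.1 i).1, (ht.1 i).2]

theorem div_gcd_mem_monicTuplesGcdDegree_zero (hh : h ∈ monicTuples e) :
    (fun i => h i / univ.gcd h) ∈
      monicTuplesGcdDegree (fun i => e i - (univ.gcd h).natDegree) 0 := by
  set g := univ.gcd h
  have hg : g.Monic := monic_gcd_of_mem_monicTuples hh
  have hmul (i : ι) : g * (h i / g) = h i :=
    EuclideanDomain.mul_div_cancel' hg.ne_zero (gcd_dvd (mem_univ i))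
  have hmonic (i : ι) : (h i / g).Monic := hg.of_mul_monic_left ((hmul i).symm ▸ (hh i).1)
  refine ⟨fun i => ⟨hmonic i, ?_⟩, ?_⟩
  · have := hg.natDegree_mul (hmonic i)
    rw [hmul i, (hh i).2] at this
    simp only
    omega
  · have : g * univ.gcd (fun i => h i / g) = g * 1 := by
      rw [← hg.gcd_mul_left, mul_one]
      simp only [hmul]
      rfl
    rw [mul_left_cancel₀ hg.ne_zero this, natDegree_one]

noncomputable def monicTuplesGcdDegreeEquiv (e : ι → ℕ) (j : ℕ) :
    monicTuplesGcdDegree (F := F) (fun i => j + e i) j ≃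
      {g : F[X] // g.Monic ∧ g.natDegree = j} × monicTuplesGcdDegree (F := F) e 0 where
  toFun h := (⟨univ.gcd h.1, monic_gcd_of_mem_monicTuples h.2.1, h.2.2⟩,
    ⟨fun i => h.1 i / univ.gcd h.1, by
      simpa only [h.2.2, add_tsub_cancel_left] using div_gcd_mem_monicTuplesGcdDegree_zero h.2.1⟩)
  invFun p := ⟨fun i => p.1.1 * p.2.1 i, by
    obtain ⟨⟨g, hg, rfl⟩, t, ht⟩ := p
    exact hg.mul_mem_monicTuplesGcdDegree ht⟩
  left_inv h := Subtype.ext <| _root_.funext fun i => EuclideanDomain.mul_div_cancel'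
    (monic_gcd_of_mem_monicTuples h.2.1).ne_zero (gcd_dvd (mem_univ i))
  right_inv := by
    rintro ⟨⟨g, hg, rfl⟩, t, ht⟩
    have hgcd := hg.gcd_mul_eq_self ht
    refine Prod.ext (Subtype.ext hgcd) (Subtype.ext (_root_.funext fun i => ?_))
    simp only [hgcd]
    exact mul_div_cancel_left₀ (t i) hg.ne_zero

end Gcd

section Count

variable {F : Type*} [Field F] [DecidableEq F] {ι : Type*} [Fintype ι]

theorem ncard_monicTuples_eq_sum [Finite F] (e : ι → ℕ) {i : ι} {N : ℕ} (hN : e i < N) :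
    (monicTuples (F := F) e).ncard = ∑ j ∈ range N, (monicTuplesGcdDegree (F := F) e j).ncard :=
  Set.ncard_eq_sum_ncard_fiberwise (finite_monicTuples e)
    fun _ hh => (natDegree_gcd_le_of_mem_monicTuples hh i).trans_lt hN

variable [Nonempty ι]

theorem ncard_monicTuplesGcdDegree {e : ι → ℕ} {j : ℕ} (hj : ∀ i, j ≤ e i) :
    (monicTuplesGcdDegree (F := F) e j).ncard =
      Nat.card F ^ j * (monicTuplesGcdDegree (F := F) (fun i => e i - j) 0).ncard := by
  obtain ⟨e, rfl⟩ : ∃ e', e = fun i => j + e' i :=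
    ⟨fun i => e i - j, _root_.funext fun i => (Nat.add_sub_of_le (hj i)).symm⟩
  simp only [add_tsub_cancel_left]
  rw [← Nat.card_coe_set_eq, Nat.card_congr (monicTuplesGcdDegreeEquiv e j), Nat.card_prod,
    natCard_monic_natDegree_eq, Nat.card_coe_set_eq]

theorem ncard_monicTuplesGcdDegree_succ {e : ι → ℕ} {j : ℕ} (hj : ∀ i, j < e i) :
    (monicTuplesGcdDegree (F := F) e (j + 1)).ncard =
      Nat.card F * (monicTuplesGcdDegree (F := F) (fun i => e i - 1) j).ncard := by
  rw [ncard_monicTuplesGcdDegree (j := j + 1) hj,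
    ncard_monicTuplesGcdDegree (fun i => Nat.le_sub_one_of_lt (hj i))]
  simp only [Nat.sub_sub, Nat.add_comm 1 j, pow_succ']
  ring

theorem ncard_monicTuplesGcdDegree_zero [Finite F] {e : ι → ℕ} (he : ∀ i, 0 < e i) :
    (monicTuplesGcdDegree (F := F) e 0).ncard =
      Nat.card F ^ ∑ i, e i - Nat.card F ^ (∑ i, e i - (Fintype.card ι - 1)) := by
  set q := Nat.card F
  obtain ⟨i₀, hi₀⟩ := Finite.exists_min e
  have hsplit : q ^ ∑ i, e i = (monicTuplesGcdDegree (F := F) e 0).ncard +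
      ∑ j ∈ range (e i₀), (monicTuplesGcdDegree (F := F) e (j + 1)).ncard := by
    rw [← ncard_monicTuples, ncard_monicTuples_eq_sum e (lt_add_one (e i₀)), sum_range_succ',
      add_comm]
  have hpred : q ^ ∑ i, (e i - 1) =
      ∑ j ∈ range (e i₀), (monicTuplesGcdDegree (F := F) (fun i => e i - 1) j).ncard := by
    rw [← ncard_monicTuples,
      ncard_monicTuples_eq_sum (fun i => e i - 1) (Nat.sub_one_lt (he i₀).ne')]
  have hshift : ∑ j ∈ range (e i₀), (monicTuplesGcdDegree (F := F) e (j + 1)).ncard =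
      q ^ (∑ i, (e i - 1) + 1) := by
    rw [pow_succ', hpred, mul_sum]
    exact sum_congr rfl fun j hj =>
      ncard_monicTuplesGcdDegree_succ fun i => (mem_range.1 hj).trans_le (hi₀ i)
  have hsum : ∑ i, (e i - 1) + Fintype.card ι = ∑ i, e i := by
    rw [Fintype.card_eq_sum_ones, ← sum_add_distrib]
    exact sum_congr rfl fun i _ => Nat.sub_add_cancel (he i)
  have hcard : 0 < Fintype.card ι := Fintype.card_pos
  rw [show ∑ i, e i - (Fintype.card ι - 1) = ∑ i, (e i - 1) + 1 by omega]
  omega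

end Count

end Polynomial

/-- Over a finite field with `q` elements, for `m ≥ 2` and `k < dᵢ` for all `i`, the number of
`m`-tuples of monic polynomials of degrees `d₁, …, d_m` whose monic gcd has degree exactly `k`
equals `q^k · (q^(Σ(dᵢ−k)) − q^(Σ(dᵢ−k)−(m−1)))`. -/
theorem count_gcd_deg_eq_tuples (F : Type*) [Field F] [Fintype F] [DecidableEq F] (q : ℕ)
    (hq : Fintype.card F = q) (m : ℕ) (hm : 2 ≤ m) (d : Fin m → ℕ) (k : ℕ)
    (hk : ∀ i, k < d i) :
    Set.ncard {h : Fin m → F[X] | (∀ i, (h i).Monic ∧ (h i).natDegree = d i) ∧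
        (Finset.univ.gcd h).natDegree = k}
      = q ^ k * (q ^ (∑ i, (d i - k)) - q ^ ((∑ i, (d i - k)) - (m - 1))) := by
  have : Nonempty (Fin m) := ⟨⟨0, by omega⟩⟩
  change (monicTuplesGcdDegree d k).ncard = _
  rw [ncard_monicTuplesGcdDegree fun i => (hk i).le,
    ncard_monicTuplesGcdDegree_zero fun i => Nat.sub_pos_of_lt (hk i), Fintype.card_fin,
    Nat.card_eq_fintype_card, hq]
end

section
/- Let F_q be a finite field with q elements and let k, l be positive natural numbers. The number of pairs (u, v) of coprime polynomials over F_q (not necessarily monic) with deg u = k and deg v = l equals (q−1)^2 · (q^{k+l} − q^{k+l−1}). -/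
/-!
Every pair of monic polynomials of degrees `k, l` is uniquely `d • (u, v)` with `d` monic (their
gcd) and `(u, v)` a coprime monic pair. Counting both sides gives
`q ^ (k + l) = ∑ j, q ^ j * M (k - j) (l - j)`, where `M a b` counts coprime monic pairs of degrees
`a, b`. Subtracting `q` times the same identity for `(k - 1, l - 1)` leaves
`M k l = q ^ (k + l) - q ^ (k + l - 1)`, and the two nonzero leading coefficients contribute the
factor `(q - 1) ^ 2`.
-/

open Polynomial

theorem Finset.set_ncard_biUnion {ι α : Type*} {t : Finset ι} {s : ι → Set α}
    (hs : ∀ i ∈ t, (s i).Finite) (h : (t : Set ι).PairwiseDisjoint s) :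
    (⋃ i ∈ t, s i).ncard = ∑ i ∈ t, (s i).ncard := by
  rw [← finsum_mem_coe_finset]
  exact t.finite_toSet.ncard_biUnion hs h

namespace Polynomial

section MonicOfNatDegree

variable (R : Type*) [Semiring R]

def monicOfNatDegree (n : ℕ) : Set R[X] := {p | p.Monic ∧ p.natDegree = n}

noncomputable def monicOfNatDegreeEquiv [Nontrivial R] (n : ℕ) :
    monicOfNatDegree R n ≃ (Fin n → R) :=
  (monicEquivDegreeLT n).trans (degreeLTEquiv R n).toEquiv

theorem ncard_monicOfNatDegree [Nontrivial R] (n : ℕ) :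
    (monicOfNatDegree R n).ncard = Nat.card R ^ n := by
  rw [← Nat.card_coe_set_eq, Nat.card_congr (monicOfNatDegreeEquiv R n), Nat.card_fun,
    Nat.card_fin]

theorem finite_monicOfNatDegree [Finite R] (n : ℕ) : (monicOfNatDegree R n).Finite := by
  nontriviality R
  exact Finite.of_equiv _ (monicOfNatDegreeEquiv R n).symm

end MonicOfNatDegree

variable {F : Type*} [Field F]

variable (F) in
def coprimeMonicPairs (k l : ℕ) : Set (F[X] × F[X]) :=
  {p | p.1 ∈ monicOfNatDegree F k ∧ p.2 ∈ monicOfNatDegree F l ∧ IsCoprime p.1 p.2}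

theorem gcd_mul_mul_of_isCoprime [DecidableEq F] {d u v : F[X]} (hd : d.Monic)
    (h : IsCoprime u v) : gcd (d * u) (d * v) = d := by
  rw [gcd_mul_left, hd.normalize_eq_self, ← normalize_gcd,
    normalize_eq_one.mpr ((gcd_isUnit_iff u v).mpr h), mul_one]

theorem exists_monic_mul_coprime {u v : F[X]} (hu : u.Monic) (hv : v.Monic) :
    ∃ d u' v', d.Monic ∧ u'.Monic ∧ v'.Monic ∧ IsCoprime u' v' ∧ u = d * u' ∧ v = d * v' := by
  classical
  obtain ⟨u', v', hu', hv', hunit⟩ := extract_gcd u v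
  have hd : (gcd u v).Monic := by
    rw [← normalize_gcd]
    exact monic_normalize (gcd_ne_zero_of_left hu.ne_zero)
  exact ⟨gcd u v, u', v', hd, hd.of_mul_monic_left (hu' ▸ hu), hd.of_mul_monic_left (hv' ▸ hv),
    (gcd_isUnit_iff u' v').mp hunit, hu', hv'⟩

variable (F) in
def gcdDecompositions (k l : ℕ) : Set (F[X] × (F[X] × F[X])) :=
  ⋃ j ∈ Finset.range (min k l + 1), monicOfNatDegree F j ×ˢ coprimeMonicPairs F (k - j) (l - j)

theorem image_smul_gcdDecompositions (k l : ℕ) :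
    (fun x : F[X] × (F[X] × F[X]) => x.1 • x.2) '' gcdDecompositions F k l =
      monicOfNatDegree F k ×ˢ monicOfNatDegree F l := by
  ext ⟨u, v⟩
  simp only [gcdDecompositions, Set.mem_image, Set.mem_iUnion₂, Finset.mem_range, Prod.exists,
    Set.mem_prod, Prod.smul_mk, smul_eq_mul, Prod.mk.injEq]
  constructor
  · rintro ⟨d, u', v', ⟨j, hj, ⟨hd, rfl⟩, ⟨hu', hku⟩, ⟨hv', hlv⟩, -⟩, rfl, rfl⟩
    refine ⟨⟨hd.mul hu', ?_⟩, ⟨hd.mul hv', ?_⟩⟩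
    · rw [hd.natDegree_mul hu', hku]; omega
    · rw [hd.natDegree_mul hv', hlv]; omega
  · rintro ⟨⟨hu, rfl⟩, ⟨hv, rfl⟩⟩
    obtain ⟨d, u', v', hd, hu', hv', hcop, rfl, rfl⟩ := exists_monic_mul_coprime hu hv
    rw [hd.natDegree_mul hu', hd.natDegree_mul hv']
    exact ⟨d, u', v', ⟨d.natDegree, by omega, ⟨hd, rfl⟩, ⟨hu', (Nat.add_sub_cancel_left _ _).symm⟩,
      ⟨hv', (Nat.add_sub_cancel_left _ _).symm⟩, hcop⟩, rfl, rfl⟩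

theorem injOn_smul_gcdDecompositions (k l : ℕ) :
    (gcdDecompositions F k l).InjOn fun x : F[X] × (F[X] × F[X]) => x.1 • x.2 := by
  classical
  rintro ⟨d, u, v⟩ hx ⟨d', u', v'⟩ hx' h
  simp only [gcdDecompositions, Set.mem_iUnion₂, Set.mem_prod, coprimeMonicPairs,
    monicOfNatDegree] at hx hx'
  obtain ⟨-, -, ⟨hd, -⟩, -, -, hcop⟩ := hx
  obtain ⟨-, -, ⟨hd', -⟩, -, -, hcop'⟩ := hx'
  simp only [Prod.smul_mk, smul_eq_mul, Prod.mk.injEq] at h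
  obtain ⟨hu, hv⟩ := h
  obtain rfl : d = d' := by
    rw [← gcd_mul_mul_of_isCoprime hd hcop, hu, hv, gcd_mul_mul_of_isCoprime hd' hcop']
  rw [mul_left_cancel₀ hd.ne_zero hu, mul_left_cancel₀ hd.ne_zero hv]

theorem finite_coprimeMonicPairs [Finite F] (k l : ℕ) : (coprimeMonicPairs F k l).Finite :=
  ((finite_monicOfNatDegree F k).prod (finite_monicOfNatDegree F l)).subset
    fun _ hp => ⟨hp.1, hp.2.1⟩

theorem ncard_gcdDecompositions [Finite F] (k l : ℕ) :
    (gcdDecompositions F k l).ncard = ∑ j ∈ Finset.range (min k l + 1),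
      Nat.card F ^ j * (coprimeMonicPairs F (k - j) (l - j)).ncard := by
  rw [gcdDecompositions, Finset.set_ncard_biUnion
    (fun j _ => (finite_monicOfNatDegree F j).prod (finite_coprimeMonicPairs _ _))]
  · simp only [Set.ncard_prod, ncard_monicOfNatDegree]
  · intro i _ j _ hij
    exact Set.disjoint_left.mpr fun x hi hj => hij (hi.1.2.symm.trans hj.1.2)

theorem sum_pow_mul_ncard_coprimeMonicPairs [Finite F] (k l : ℕ) :
    ∑ j ∈ Finset.range (min k l + 1),
      Nat.card F ^ j * (coprimeMonicPairs F (k - j) (l - j)).ncard = Nat.card F ^ (k + l) := by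
  rw [← ncard_gcdDecompositions, ← (injOn_smul_gcdDecompositions k l).ncard_image,
    image_smul_gcdDecompositions, Set.ncard_prod, ncard_monicOfNatDegree,
    ncard_monicOfNatDegree, pow_add]

theorem ncard_coprimeMonicPairs_add_pow [Finite F] {k l : ℕ} (hk : 0 < k) (hl : 0 < l) :
    (coprimeMonicPairs F k l).ncard + Nat.card F ^ (k + l - 1) = Nat.card F ^ (k + l) := by
  obtain ⟨k, rfl⟩ := Nat.exists_eq_add_one.mpr hk
  obtain ⟨l, rfl⟩ := Nat.exists_eq_add_one.mpr hl
  have h := sum_pow_mul_ncard_coprimeMonicPairs (F := F) (k + 1) (l + 1)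
  rw [min_add_add_right, Finset.sum_range_succ'] at h
  simp only [Nat.add_sub_add_right, pow_succ', mul_assoc, ← Finset.mul_sum,
    sum_pow_mul_ncard_coprimeMonicPairs, pow_zero, one_mul, Nat.sub_zero] at h
  rw [show k + 1 + (l + 1) - 1 = k + l + 1 by omega, pow_succ']
  linarith

theorem exists_eq_C_mul_monic {p : F[X]} (hp : p ≠ 0) : ∃ a u, a ≠ 0 ∧ u.Monic ∧ p = C a * u :=
  ⟨p.leadingCoeff, C p.leadingCoeff⁻¹ * p, leadingCoeff_ne_zero.mpr hp,
    monic_C_mul_of_mul_leadingCoeff_eq_one (inv_mul_cancel₀ (leadingCoeff_ne_zero.mpr hp)), by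
    rw [← mul_assoc, ← C_mul, mul_inv_cancel₀ (leadingCoeff_ne_zero.mpr hp), C_1, one_mul]⟩

theorem eq_and_eq_of_C_mul_eq_C_mul {a b : F} {u v : F[X]} (ha : a ≠ 0) (hu : u.Monic)
    (hv : v.Monic) (h : C a * u = C b * v) : a = b ∧ u = v := by
  obtain rfl : a = b := by
    simpa [hu.leadingCoeff, hv.leadingCoeff] using congrArg leadingCoeff h
  exact ⟨rfl, mul_left_cancel₀ (C_ne_zero.mpr ha) h⟩

theorem isCoprime_C_mul_C_mul_iff {a b : F} {u v : F[X]} (ha : a ≠ 0) (hb : b ≠ 0) :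
    IsCoprime (C a * u) (C b * v) ↔ IsCoprime u v := by
  rw [isCoprime_mul_unit_left_left (isUnit_C.mpr ha.isUnit),
    isCoprime_mul_unit_left_right (isUnit_C.mpr hb.isUnit)]

theorem image_C_mul_coprimeMonicPairs (k l : ℕ) :
    (fun x : (F × F) × (F[X] × F[X]) => (C x.1.1 * x.2.1, C x.1.2 * x.2.2)) ''
        (({0}ᶜ ×ˢ {0}ᶜ) ×ˢ coprimeMonicPairs F k l) =
      {p | p.1 ≠ 0 ∧ p.2 ≠ 0 ∧ p.1.natDegree = k ∧ p.2.natDegree = l ∧ IsCoprime p.1 p.2} := by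
  ext ⟨p, q⟩
  simp only [Set.mem_image, Set.mem_prod, coprimeMonicPairs, monicOfNatDegree, Prod.exists,
    Set.mem_compl_singleton_iff, Prod.mk.injEq]
  constructor
  · rintro ⟨a, b, u, v, ⟨⟨ha, hb⟩, ⟨hu, rfl⟩, ⟨hv, rfl⟩, hcop⟩, rfl, rfl⟩
    exact ⟨mul_ne_zero (C_ne_zero.mpr ha) hu.ne_zero, mul_ne_zero (C_ne_zero.mpr hb) hv.ne_zero,
      natDegree_C_mul ha, natDegree_C_mul hb, (isCoprime_C_mul_C_mul_iff ha hb).mpr hcop⟩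
  · rintro ⟨hp, hq, rfl, rfl, hcop⟩
    obtain ⟨a, u, ha, hu, rfl⟩ := exists_eq_C_mul_monic hp
    obtain ⟨b, v, hb, hv, rfl⟩ := exists_eq_C_mul_monic hq
    exact ⟨a, b, u, v, ⟨⟨ha, hb⟩, ⟨hu, (natDegree_C_mul ha).symm⟩, ⟨hv, (natDegree_C_mul hb).symm⟩,
      (isCoprime_C_mul_C_mul_iff ha hb).mp hcop⟩, rfl, rfl⟩

theorem injOn_C_mul_coprimeMonicPairs (k l : ℕ) :
    (({0}ᶜ ×ˢ {0}ᶜ) ×ˢ coprimeMonicPairs F k l).InjOn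
      fun x : (F × F) × (F[X] × F[X]) => (C x.1.1 * x.2.1, C x.1.2 * x.2.2) := by
  rintro ⟨⟨a, b⟩, u, v⟩ ⟨⟨ha, hb⟩, ⟨hu, -⟩, ⟨hv, -⟩, -⟩ ⟨⟨a', b'⟩, u', v'⟩
    ⟨-, ⟨hu', -⟩, ⟨hv', -⟩, -⟩ h
  obtain ⟨h₁, h₂⟩ := Prod.mk.inj h
  obtain ⟨rfl, rfl⟩ := eq_and_eq_of_C_mul_eq_C_mul ha hu hu' h₁
  obtain ⟨rfl, rfl⟩ := eq_and_eq_of_C_mul_eq_C_mul hb hv hv' h₂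
  rfl

end Polynomial

/-- Over a finite field with `q` elements, for positive `k, l`, the number of pairs of coprime
(not necessarily monic) polynomials of degrees `k` and `l` equals
`(q−1)² · (q^(k+l) − q^(k+l−1))`. -/
theorem count_coprime_pairs_nonmonic (F : Type*) [Field F] [Fintype F] (q : ℕ)
    (hq : Fintype.card F = q) (k l : ℕ) (hk : 0 < k) (hl : 0 < l) :
    Set.ncard {p : F[X] × F[X] | p.1 ≠ 0 ∧ p.2 ≠ 0 ∧ p.1.natDegree = k ∧ p.2.natDegree = l ∧
        IsCoprime p.1 p.2}
      = (q - 1) ^ 2 * (q ^ (k + l) - q ^ (k + l - 1)) := by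
  rw [← Nat.card_eq_fintype_card] at hq
  subst hq
  have hcount := ncard_coprimeMonicPairs_add_pow (F := F) hk hl
  rw [← image_C_mul_coprimeMonicPairs, (injOn_C_mul_coprimeMonicPairs k l).ncard_image,
    Set.ncard_prod, Set.ncard_prod, Set.ncard_compl, Set.ncard_singleton, sq]
  congr 1
  omega
end
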